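/- There exists a constant C ≥ 0 such that for all β₁, β₂ ∈ [0,2] and all measurable functions f₁, f₂ : [0,1] → [1,2], one has ‖u(·; β₁, f₁) − u(·; β₂, f₂)‖_{L²} ≤ C (|β₁ − β₂| + ‖Γ(f₁ − f₂)‖_{L²}). (This is the Lipschitz condition (7) of Assumption 3(a) with r = 1 for the SemiPDE model of Example 3.) -/

import Mathlib

/-!
Write `v(x; β₁, f₁) − v(x; β₂, f₂)` as a change of parameter with `f₁` fixed plus
`v(x; β₂, f₁ − f₂)`. The first part is `O(|β₁ − β₂|)` because the kernel `e^{β(x−s)+s}` is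
Lipschitz in `β` on bounded sets. For the second, integrate by parts against the primitive
`G = Γ(f₁ − f₂)`, which is absolutely continuous, so no regularity of the `fᵢ` is needed: this
bounds it by `|G(x)| + ‖G‖_{L¹}`. Squaring, integrating over `[0, 1]` and Jensen's
`‖G‖_{L¹} ≤ ‖G‖_{L²}` give the claim with `C = 12 e⁵`.
-/

open MeasureTheory Set

/-- The solution component `v(x; β, f) = ∫_0^x e^{β(x−s)} e^s f(s) ds`. -/
noncomputable def v (β : ℝ) (f : ℝ → ℝ) (x : ℝ) : ℝ :=
  ∫ s in (0:ℝ)..x, Real.exp (β * (x - s)) * Real.exp s * f s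

/-- The solution `u(x; β, f) = (v(x; β, f), v(x; 2β, f))` of the SemiPDE model of Example 3. -/
noncomputable def u (β : ℝ) (f : ℝ → ℝ) (x : ℝ) : ℝ × ℝ :=
  (v β f x, v (2 * β) f x)

/-- The first-order integral (Volterra) operator `(Γg)(x) = ∫_0^x g(s) ds`. -/
noncomputable def Γ (g : ℝ → ℝ) (x : ℝ) : ℝ :=
  ∫ s in (0:ℝ)..x, g s

/-- L² norm on [0,1] of a real-valued function. -/
noncomputable def L2 (w : ℝ → ℝ) : ℝ :=
  Real.sqrt (∫ x in (0:ℝ)..1, (w x) ^ 2)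

/-- L² norm on [0,1] of an ℝ²-valued function (Euclidean norm on ℝ²). -/
noncomputable def L2v (w : ℝ → ℝ × ℝ) : ℝ :=
  Real.sqrt (∫ x in (0:ℝ)..1, ((w x).1 ^ 2 + (w x).2 ^ 2))

open Real intervalIntegral

theorem abs_exp_sub_exp_le {a b M : ℝ} (ha : a ≤ M) (hb : b ≤ M) :
    |exp a - exp b| ≤ exp M * |a - b| := by
  simpa using (convex_Iic M).norm_image_sub_le_of_norm_deriv_le
    (fun _ _ => differentiableAt_exp) (fun x hx => by simpa using exp_le_exp.2 hx) hb ha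

theorem AbsolutelyContinuousOnInterval.integral_mul_eq_sub_integral_deriv_mul_primitive
    {φ d : ℝ → ℝ} {a b : ℝ} (hφ : AbsolutelyContinuousOnInterval φ a b)
    (hd : IntervalIntegrable d volume a b) :
    ∫ s in a..b, φ s * d s =
      φ b * (∫ s in a..b, d s) - ∫ s in a..b, deriv φ s * ∫ t in a..s, d t := by
  have hG := hd.absolutelyContinuousOnInterval_intervalIntegral left_mem_uIcc
  have hderiv : ∫ s in a..b, φ s * d s =
      ∫ s in a..b, φ s * deriv (fun x => ∫ t in a..x, d t) s := by
    refine integral_congr_ae ?_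
    filter_upwards [hd.ae_hasDerivAt_integral] with s hs hsab
    rw [(hs (uIoc_subset_uIcc hsab) a left_mem_uIcc).deriv]
  rw [hderiv, hφ.integral_mul_deriv_eq_deriv_mul hG]
  simp

theorem Measurable.intervalIntegrable_of_forall_mem_Icc {f : ℝ → ℝ} {a b m M : ℝ}
    (hf : Measurable f) (hab : a ≤ b) (hfM : ∀ s ∈ Icc a b, f s ∈ Icc m M) :
    IntervalIntegrable f volume a b :=
  (intervalIntegrable_iff_integrableOn_Icc_of_le hab).2 <|
    Measure.integrableOn_of_bounded measure_Icc_lt_top.ne hf.aestronglyMeasurable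
      (ae_restrict_of_forall_mem measurableSet_Icc fun s hs =>
        abs_le_max_abs_abs (hfM s hs).1 (hfM s hs).2)

theorem IntervalIntegrable.mono_of_mem_Icc {f : ℝ → ℝ} {a b x : ℝ}
    (hf : IntervalIntegrable f volume a b) (hx : x ∈ Icc a b) :
    IntervalIntegrable f volume a x :=
  hf.mono_set (uIcc_subset_uIcc left_mem_uIcc (Icc_subset_uIcc hx))

theorem continuousOn_Γ {d : ℝ → ℝ} (hd : IntervalIntegrable d volume 0 1) :
    ContinuousOn (Γ d) (Icc 0 1) := by
  have := continuousOn_primitive_interval (μ := volume) (f := d) (a := 0) (b := 1)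
    (by simpa [uIcc_of_le zero_le_one] using
      (intervalIntegrable_iff_integrableOn_Icc_of_le zero_le_one).1 hd)
  rwa [uIcc_of_le zero_le_one] at this

theorem hasDerivAt_kernel (β x s : ℝ) :
    HasDerivAt (fun s => exp (β * (x - s)) * exp s) ((1 - β) * (exp (β * (x - s)) * exp s)) s := by
  have := (((hasDerivAt_id' s).const_sub x).const_mul β).exp.mul (hasDerivAt_exp s)
  exact this.congr_deriv (by ring)

theorem kernel_exponent_le {β B x s : ℝ} (hβ : β ∈ Icc 0 B) (hs : s ∈ Icc 0 x) (hx : x ≤ 1) :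
    β * (x - s) + s ≤ B + 1 := by
  nlinarith [hβ.1, hβ.2, hs.1, hs.2]

theorem v_sub_v {β x : ℝ} {f₁ f₂ : ℝ → ℝ} (hf₁ : IntervalIntegrable f₁ volume 0 x)
    (hf₂ : IntervalIntegrable f₂ volume 0 x) :
    v β f₁ x - v β f₂ x = v β (fun s => f₁ s - f₂ s) x := by
  rw [v, v, v, ← integral_sub (hf₁.continuousOn_mul (by fun_prop))
    (hf₂.continuousOn_mul (by fun_prop))]
  simp only [mul_sub]

theorem abs_v_sub_v_le_mul_abs_sub {β₁ β₂ B M x : ℝ} {f : ℝ → ℝ} (hβ₁ : β₁ ∈ Icc 0 B)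
    (hβ₂ : β₂ ∈ Icc 0 B) (hx : x ∈ Icc (0:ℝ) 1) (hf : IntervalIntegrable f volume 0 1)
    (hM : ∀ s ∈ Icc (0:ℝ) 1, |f s| ≤ M) :
    |v β₁ f x - v β₂ f x| ≤ M * exp (B + 1) * |β₁ - β₂| := by
  have hfx := hf.mono_of_mem_Icc hx
  have hsub : v β₁ f x - v β₂ f x =
      ∫ s in (0:ℝ)..x, (exp (β₁ * (x - s) + s) - exp (β₂ * (x - s) + s)) * f s := by
    rw [v, v, ← integral_sub (hfx.continuousOn_mul (by fun_prop))
      (hfx.continuousOn_mul (by fun_prop))]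
    simp only [exp_add, sub_mul]
  have hpt : ∀ s ∈ uIoc 0 x,
      ‖(exp (β₁ * (x - s) + s) - exp (β₂ * (x - s) + s)) * f s‖ ≤ M * exp (B + 1) * |β₁ - β₂| := by
    intro s hs
    rw [uIoc_of_le hx.1] at hs
    have hs' : s ∈ Icc 0 x := Ioc_subset_Icc_self hs
    have hexp := abs_exp_sub_exp_le (kernel_exponent_le hβ₁ hs' hx.2)
      (kernel_exponent_le hβ₂ hs' hx.2)
    have harg : |β₁ * (x - s) + s - (β₂ * (x - s) + s)| ≤ |β₁ - β₂| := by
      rw [show β₁ * (x - s) + s - (β₂ * (x - s) + s) = (β₁ - β₂) * (x - s) by ring, abs_mul,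
        abs_of_nonneg (sub_nonneg.2 hs'.2)]
      exact mul_le_of_le_one_right (abs_nonneg _) (by linarith [hs.1, hx.2])
    rw [Real.norm_eq_abs, abs_mul]
    calc _ ≤ exp (B + 1) * |β₁ - β₂| * M :=
          mul_le_mul (hexp.trans (by gcongr)) (hM s ⟨hs.1.le, hs.2.trans hx.2⟩) (abs_nonneg _)
            (by positivity)
      _ = _ := by ring
  have hM0 : 0 ≤ M := (abs_nonneg _).trans (hM 0 ⟨le_rfl, zero_le_one⟩)
  rw [hsub]
  calc _ ≤ M * exp (B + 1) * |β₁ - β₂| * |x - 0| := norm_integral_le_of_norm_le_const hpt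
    _ ≤ M * exp (B + 1) * |β₁ - β₂| := by
      rw [sub_zero, abs_of_nonneg hx.1]
      exact mul_le_of_le_one_right (by positivity) hx.2

theorem abs_v_le {β B x : ℝ} {d : ℝ → ℝ} (hβ : β ∈ Icc 0 B) (hx : x ∈ Icc (0:ℝ) 1)
    (hd : IntervalIntegrable d volume 0 1) :
    |v β d x| ≤ exp (B + 1) * (|Γ d x| + (1 + B) * ∫ s in (0:ℝ)..1, |Γ d s|) := by
  set φ : ℝ → ℝ := fun s => exp (β * (x - s)) * exp s with hφ_def
  have hφ_le : ∀ s ∈ Icc 0 x, φ s ≤ exp (B + 1) := fun s hs => by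
    simpa only [hφ_def, ← exp_add] using exp_le_exp.2 (kernel_exponent_le hβ hs hx.2)
  have hφ_pos : ∀ s, 0 < φ s := fun s => mul_pos (exp_pos _) (exp_pos _)
  have hφ' : deriv φ = fun s => (1 - β) * φ s :=
    funext fun s => (hasDerivAt_kernel β x s).deriv
  have hφ_ac : AbsolutelyContinuousOnInterval φ 0 x :=
    (by fun_prop : ContDiff ℝ 1 φ).contDiffOn.absolutelyContinuousOnInterval
  have hG : IntervalIntegrable (Γ d) volume 0 1 :=
    (continuousOn_Γ hd).intervalIntegrable_of_Icc zero_le_one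
  have hGx := hG.mono_of_mem_Icc hx
  have hB : 0 ≤ B := hβ.1.trans hβ.2
  have hrem : |∫ s in (0:ℝ)..x, deriv φ s * Γ d s| ≤
      exp (B + 1) * ((1 + B) * ∫ s in (0:ℝ)..1, |Γ d s|) := by
    rw [hφ']
    calc _ ≤ ∫ s in (0:ℝ)..x, |(1 - β) * φ s * Γ d s| := abs_integral_le_integral_abs hx.1
      _ ≤ ∫ s in (0:ℝ)..x, (1 + B) * exp (B + 1) * |Γ d s| := by
        refine integral_mono_on hx.1 (hGx.continuousOn_mul (by fun_prop)).abs
          (hGx.abs.const_mul _) fun s hs => ?_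
        rw [abs_mul, abs_mul, abs_of_pos (hφ_pos s)]
        gcongr
        · exact abs_le.2 ⟨by linarith [hβ.1, hβ.2], by linarith [hβ.1]⟩
        · exact hφ_le s hs
      _ ≤ (1 + B) * exp (B + 1) * ∫ s in (0:ℝ)..1, |Γ d s| := by
        rw [intervalIntegral.integral_const_mul]
        gcongr
        exact integral_mono_interval le_rfl hx.1 hx.2 (ae_of_all _ fun _ => abs_nonneg _) hG.abs
      _ = _ := by ring
  rw [v, hφ_ac.integral_mul_eq_sub_integral_deriv_mul_primitive (hd.mono_of_mem_Icc hx)]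
  calc _ ≤ |φ x * Γ d x| + |∫ s in (0:ℝ)..x, deriv φ s * Γ d s| := abs_sub _ _
    _ ≤ exp (B + 1) * |Γ d x| + exp (B + 1) * ((1 + B) * ∫ s in (0:ℝ)..1, |Γ d s|) := by
      rw [abs_mul, abs_of_pos (hφ_pos x)]
      gcongr
      exact hφ_le x ⟨hx.1, le_rfl⟩
    _ = _ := by ring

theorem abs_v_sub_v_le {β₁ β₂ B M x : ℝ} {f₁ f₂ : ℝ → ℝ} (hβ₁ : β₁ ∈ Icc 0 B)
    (hβ₂ : β₂ ∈ Icc 0 B) (hx : x ∈ Icc (0:ℝ) 1) (hf₁ : IntervalIntegrable f₁ volume 0 1)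
    (hf₂ : IntervalIntegrable f₂ volume 0 1) (hM : ∀ s ∈ Icc (0:ℝ) 1, |f₁ s| ≤ M) :
    |v β₁ f₁ x - v β₂ f₂ x| ≤ exp (B + 1) * (M * |β₁ - β₂| + |Γ (fun s => f₁ s - f₂ s) x|
      + (1 + B) * ∫ s in (0:ℝ)..1, |Γ (fun s => f₁ s - f₂ s) s|) := by
  have hparam := abs_v_sub_v_le_mul_abs_sub hβ₁ hβ₂ hx hf₁ hM
  have hdiff := abs_v_le hβ₂ hx (hf₁.sub hf₂)
  rw [← v_sub_v (hf₁.mono_of_mem_Icc hx) (hf₂.mono_of_mem_Icc hx)] at hdiff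
  calc _ = |(v β₁ f₁ x - v β₂ f₁ x) + (v β₂ f₁ x - v β₂ f₂ x)| := by ring_nf
    _ ≤ |v β₁ f₁ x - v β₂ f₁ x| + |v β₂ f₁ x - v β₂ f₂ x| := abs_add_le _ _
    _ ≤ M * exp (B + 1) * |β₁ - β₂| + exp (B + 1) * (|Γ (fun s => f₁ s - f₂ s) x|
          + (1 + B) * ∫ s in (0:ℝ)..1, |Γ (fun s => f₁ s - f₂ s) s|) := add_le_add hparam hdiff
    _ = _ := by ring

theorem integral_abs_le_L2 {g : ℝ → ℝ} (hg : ContinuousOn g (Icc 0 1)) :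
    ∫ x in (0:ℝ)..1, |g x| ≤ L2 g := by
  have : IsProbabilityMeasure (volume.restrict (Ioc (0:ℝ) 1)) := ⟨by simp⟩
  have hJensen := (convexOn_pow 2).map_integral_le (continuous_pow 2).continuousOn isClosed_Ici
    (ae_of_all _ fun x => abs_nonneg (g x))
    ((hg.abs.integrableOn_Icc (μ := volume)).mono_set Ioc_subset_Icc_self)
    (((hg.abs.pow 2).integrableOn_Icc (μ := volume)).mono_set Ioc_subset_Icc_self)
  rw [L2, Real.le_sqrt (intervalIntegral.integral_nonneg zero_le_one fun _ _ => abs_nonneg _)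
    (intervalIntegral.integral_nonneg zero_le_one fun _ _ => sq_nonneg _)]
  simpa [intervalIntegral.integral_of_le zero_le_one] using hJensen

theorem L2v_le_of_abs_le {w : ℝ → ℝ × ℝ} {g : ℝ → ℝ} {a b : ℝ} (hg : ContinuousOn g (Icc 0 1))
    (ha : 0 ≤ a) (hb : 0 ≤ b)
    (hw : ∀ x ∈ Icc (0:ℝ) 1, |(w x).1| ≤ a + b * |g x| ∧ |(w x).2| ≤ a + b * |g x|) :
    L2v w ≤ 2 * (a + b * L2 g) := by
  set Q := ∫ x in (0:ℝ)..1, g x ^ 2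
  have hQ : 0 ≤ Q := intervalIntegral.integral_nonneg zero_le_one fun _ _ => sq_nonneg _
  have hg2 : IntervalIntegrable (fun x => g x ^ 2) volume 0 1 :=
    (hg.pow 2).intervalIntegrable_of_Icc zero_le_one
  have hpt : ∀ x ∈ Icc (0:ℝ) 1, (w x).1 ^ 2 + (w x).2 ^ 2 ≤ 4 * a ^ 2 + 4 * b ^ 2 * g x ^ 2 := by
    intro x hx
    obtain ⟨h₁, h₂⟩ := hw x hx
    have h₁' := pow_le_pow_left₀ (abs_nonneg _) h₁ 2
    have h₂' := pow_le_pow_left₀ (abs_nonneg _) h₂ 2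
    rw [sq_abs] at h₁' h₂'
    nlinarith [sq_abs (g x), sq_nonneg (a - b * |g x|)]
  have hint : ∫ x in (0:ℝ)..1, ((w x).1 ^ 2 + (w x).2 ^ 2) ≤ 4 * a ^ 2 + 4 * b ^ 2 * Q := by
    have hbound : IntervalIntegrable (fun x => 4 * a ^ 2 + 4 * b ^ 2 * g x ^ 2) volume 0 1 :=
      intervalIntegrable_const.add (hg2.const_mul _)
    calc _ ≤ ∫ x in (0:ℝ)..1, (4 * a ^ 2 + 4 * b ^ 2 * g x ^ 2) := by
          simp only [intervalIntegral.integral_of_le zero_le_one]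
          exact integral_mono_of_nonneg (ae_of_all _ fun _ => by positivity) hbound.1
            (ae_restrict_of_forall_mem measurableSet_Ioc fun x hx => hpt x (Ioc_subset_Icc_self hx))
      _ = _ := by
          rw [intervalIntegral.integral_add intervalIntegrable_const (hg2.const_mul _),
            intervalIntegral.integral_const_mul]
          simp [Q]
  rw [L2v, L2, Real.sqrt_le_left (by positivity)]
  nlinarith [Real.sq_sqrt hQ, mul_nonneg (mul_nonneg ha hb) (Real.sqrt_nonneg Q)]

/-- Lipschitz condition (7) of Assumption 3(a) with r = 1 for the SemiPDE model of Example 3. -/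
theorem lipschitz_condition_r_one :
    ∃ C : ℝ, 0 ≤ C ∧
      ∀ β₁ ∈ Set.Icc (0:ℝ) 2, ∀ β₂ ∈ Set.Icc (0:ℝ) 2,
        ∀ f₁ f₂ : ℝ → ℝ, Measurable f₁ → Measurable f₂ →
          (∀ s ∈ Set.Icc (0:ℝ) 1, f₁ s ∈ Set.Icc (1:ℝ) 2) →
          (∀ s ∈ Set.Icc (0:ℝ) 1, f₂ s ∈ Set.Icc (1:ℝ) 2) →
          L2v (fun x => u β₁ f₁ x - u β₂ f₂ x) ≤
            C * (|β₁ - β₂| + L2 (Γ (fun x => f₁ x - f₂ x))) := by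
  refine ⟨12 * exp 5, by positivity, ?_⟩
  intro β₁ hβ₁ β₂ hβ₂ f₁ f₂ hf₁ hf₂ hb₁ hb₂
  have hi₁ := hf₁.intervalIntegrable_of_forall_mem_Icc zero_le_one hb₁
  have hi₂ := hf₂.intervalIntegrable_of_forall_mem_Icc zero_le_one hb₂
  have hM : ∀ s ∈ Icc (0:ℝ) 1, |f₁ s| ≤ 2 := fun s hs =>
    abs_le.2 ⟨by linarith [(hb₁ s hs).1], (hb₁ s hs).2⟩
  set G := Γ (fun x => f₁ x - f₂ x)
  have hG : ContinuousOn G (Icc 0 1) := continuousOn_Γ (hi₁.sub hi₂)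
  set I := ∫ x in (0:ℝ)..1, |G x|
  have hI : 0 ≤ I := intervalIntegral.integral_nonneg zero_le_one fun _ _ => abs_nonneg _
  have hβ : ∀ β ∈ Icc (0:ℝ) 2, β ∈ Icc (0:ℝ) 4 ∧ 2 * β ∈ Icc (0:ℝ) 4 := fun β h =>
    ⟨⟨h.1, by linarith [h.2]⟩, ⟨by linarith [h.1], by linarith [h.2]⟩⟩
  have hΔ : |2 * β₁ - 2 * β₂| = 2 * |β₁ - β₂| := by rw [← mul_sub, abs_mul, abs_two]
  have hpt : ∀ x ∈ Icc (0:ℝ) 1,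
      |(u β₁ f₁ x - u β₂ f₂ x).1| ≤ exp 5 * (4 * |β₁ - β₂| + 5 * I) + exp 5 * |G x| ∧
      |(u β₁ f₁ x - u β₂ f₂ x).2| ≤ exp 5 * (4 * |β₁ - β₂| + 5 * I) + exp 5 * |G x| := by
    intro x hx
    have h₁ := abs_v_sub_v_le (hβ β₁ hβ₁).1 (hβ β₂ hβ₂).1 hx hi₁ hi₂ hM
    have h₂ := abs_v_sub_v_le (hβ β₁ hβ₁).2 (hβ β₂ hβ₂).2 hx hi₁ hi₂ hM
    rw [hΔ] at h₂
    norm_num at h₁ h₂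
    change _ ≤ exp 5 * (_ + |G x| + 5 * I) at h₁ h₂
    exact ⟨h₁.trans (by nlinarith [exp_pos 5, abs_nonneg (β₁ - β₂)]), h₂.trans_eq (by ring)⟩
  calc _ ≤ 2 * (exp 5 * (4 * |β₁ - β₂| + 5 * I) + exp 5 * L2 G) :=
        L2v_le_of_abs_le hG (by positivity) (exp_pos 5).le hpt
    _ ≤ 12 * exp 5 * (|β₁ - β₂| + L2 G) := by
        nlinarith [integral_abs_le_L2 hG, exp_pos 5, abs_nonneg (β₁ - β₂)]
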